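/- arXiv:1605.01958 — 2 statements merged into one kernel-verified Lean document; each statement's English description precedes it below -/
import Mathlib

section
/- Suppose the Poincaré polynomial of (G, Re) is palindrome, and let m ∈ G be an element with ℓ(m) = d. Then for every 0 ≤ i ≤ d, the map g ↦ g⁻¹m is a bijection from the set {g ∈ G : ℓ(g) = i} onto the set {h ∈ G : ℓ(h) = d − i}; in particular, every element of length d − i has the form g⁻¹m for some g of length i. -/
/-- The length of `g ∈ G` with respect to a generating set `Re`:
the smallest `n` such that `g` is a product of `n` elements of `Re`. -/
noncomputable def wordLength {G : Type*} [Group G] (Re : Set G) (g : G) : ℕ :=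
  sInf {n : ℕ | ∃ l : List G, (∀ x ∈ l, x ∈ Re) ∧ l.length = n ∧ l.prod = g}

lemma wordLength_spec {G : Type*} [Group G] [Finite G] (Re : Set G)
    (hgen : Subgroup.closure Re = ⊤) (g : G) :
    ∃ l : List G, (∀ x ∈ l, x ∈ Re) ∧ l.length = wordLength Re g ∧ l.prod = g := by
  have hmem : g ∈ Submonoid.closure Re := by
    have hg : g ∈ Subgroup.closure Re := hgen ▸ Subgroup.mem_top g
    refine Subgroup.closure_induction (fun x hx => Submonoid.subset_closure hx)
      (Submonoid.one_mem _) (fun x y _ _ hx hy => Submonoid.mul_mem _ hx hy)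
      (fun x _ hx => ?_) hg
    have hx1 : x ^ orderOf x = 1 := pow_orderOf_eq_one x
    have hpos : 0 < orderOf x := orderOf_pos x
    have : x⁻¹ = x ^ (orderOf x - 1) := by
      rw [eq_comm, eq_inv_iff_mul_eq_one, ← pow_succ, Nat.sub_add_cancel hpos, hx1]
    rw [this]
    exact Submonoid.pow_mem _ hx _
  obtain ⟨l, hl, hprod⟩ := Submonoid.exists_list_of_mem_closure hmem
  have hne : {n : ℕ | ∃ l : List G, (∀ x ∈ l, x ∈ Re) ∧ l.length = n ∧ l.prod = g}.Nonempty :=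
    ⟨l.length, l, hl, rfl, hprod⟩
  obtain ⟨l', hl', hlen', hprod'⟩ := Nat.sInf_mem hne
  exact ⟨l', hl', hlen', hprod'⟩

lemma wordLength_mul_le {G : Type*} [Group G] [Finite G] (Re : Set G)
    (hgen : Subgroup.closure Re = ⊤) (a b : G) :
    wordLength Re (a * b) ≤ wordLength Re a + wordLength Re b := by
  obtain ⟨la, hla, hlena, hproda⟩ := wordLength_spec Re hgen a
  obtain ⟨lb, hlb, hlenb, hprodb⟩ := wordLength_spec Re hgen b
  refine Nat.sInf_le ⟨la ++ lb, ?_, ?_, ?_⟩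
  · intro x hx
    rcases List.mem_append.mp hx with h | h
    · exact hla x h
    · exact hlb x h
  · simp [hlena, hlenb]
  · simp [hproda, hprodb]

/-- If the Poincaré polynomial of `(G, Re)` is palindrome and `ℓ(m) = d`, then for
every `0 ≤ i ≤ d` the map `g ↦ g⁻¹ * m` is a bijection from the set of elements
of length `i` onto the set of elements of length `d - i`. -/
theorem bijOn_inv_mul_of_palindrome
    {G : Type*} [Group G] [Finite G] (Re : Set G)
    (hgen : Subgroup.closure Re = ⊤) (hne : (1 : G) ∉ Re)
    (d : ℕ) (hub : ∀ g : G, wordLength Re g ≤ d) (hex : ∃ g : G, wordLength Re g = d)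
    (hpal : ∀ i ≤ d, Nat.card {g : G // wordLength Re g = i}
      = Nat.card {g : G // wordLength Re g = d - i})
    (m : G) (hm : wordLength Re m = d) :
    ∀ i ≤ d, Set.BijOn (fun g : G => g⁻¹ * m)
      {g : G | wordLength Re g = i} {h : G | wordLength Re h = d - i} := by
  intro i
  induction i using Nat.strong_induction_on with
  | _ i IH =>
  intro hi
  have hinj : Set.InjOn (fun g : G => g⁻¹ * m) {g : G | wordLength Re g = i} := by
    intro a _ b _ hab
    simpa using mul_right_cancel (hab : a⁻¹ * m = b⁻¹ * m)
  have hmaps : Set.MapsTo (fun g : G => g⁻¹ * m)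
      {g : G | wordLength Re g = i} {h : G | wordLength Re h = d - i} := by
    intro g hg
    simp only [Set.mem_setOf_eq] at hg ⊢
    have hlow : d - i ≤ wordLength Re (g⁻¹ * m) := by
      have h1 : wordLength Re m ≤ wordLength Re g + wordLength Re (g⁻¹ * m) := by
        have := wordLength_mul_le Re hgen g (g⁻¹ * m)
        simpa using this
      omega
    by_contra hne2
    have hk : d - i < wordLength Re (g⁻¹ * m) := lt_of_le_of_ne hlow (Ne.symm hne2)
    set k := wordLength Re (g⁻¹ * m) with hkdef
    have hkd : k ≤ d := hub _
    have hj : d - k < i := by omega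
    have hbij := IH (d - k) hj (by omega)
    have hmem : g⁻¹ * m ∈ {h : G | wordLength Re h = d - (d - k)} := by
      simp only [Set.mem_setOf_eq]
      omega
    obtain ⟨h, hh, hhe⟩ := hbij.surjOn hmem
    have : h = g := by simpa using mul_right_cancel (hhe : h⁻¹ * m = g⁻¹ * m)
    rw [this] at hh
    simp only [Set.mem_setOf_eq] at hh
    omega
  refine ⟨hmaps, hinj, ?_⟩
  -- surjectivity via cardinality
  have hcard : Nat.card {g : G | wordLength Re g = i} =
      Nat.card {g : G | wordLength Re g = d - i} := hpal i hi
  have himg : (fun g : G => g⁻¹ * m) '' {g : G | wordLength Re g = i}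
      = {h : G | wordLength Re h = d - i} := by
    have hsub := hmaps.image_subset
    refine Set.eq_of_subset_of_ncard_le hsub ?_ (Set.toFinite _)
    rw [Set.ncard_image_of_injOn hinj, ← Nat.card_coe_set_eq, ← Nat.card_coe_set_eq, hcard]
  rw [Set.SurjOn, himg]
end

section
/- Let k be a field. Suppose the Poincaré polynomial of (G, Re) is palindrome, and let m ∈ G be the unique element with ℓ(m) = d. Let α : G × G → k be any function such that α(g, h) ≠ 0 whenever ℓ(gh) = ℓ(g) + ℓ(h). Define a k-bilinear form B on the free k-module with basis G by setting, on basis elements, B(g, h) = α(g, h) if gh = m and ℓ(g) + ℓ(h) = d, and B(g, h) = 0 otherwise. Then B is nondegenerate: for every nonzero x there exists y with B(x, y) ≠ 0, and for every nonzero y there exists x with B(x, y) ≠ 0. (This is the nondegenerate bilinear form making any skew Hasse algebra associated to (G, Re) Frobenius.) -/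
open Classical

section aux

variable {G : Type*} [Group G] [Finite G] (Re : Set G)

lemma wl_exists (hgen : Subgroup.closure Re = ⊤) (g : G) :
    ∃ l : List G, (∀ x ∈ l, x ∈ Re) ∧ l.prod = g := by
  have hmem : g ∈ Subgroup.closure Re := by rw [hgen]; trivial
  have hsub : g ∈ Submonoid.closure Re := by
    refine Subgroup.closure_induction (fun x hx => Submonoid.subset_closure hx)
      (Submonoid.one_mem _) (fun x y _ _ hx hy => Submonoid.mul_mem _ hx hy)
      (fun x _ hx => ?_) hmem
    have h1 : x ^ orderOf x = 1 := pow_orderOf_eq_one x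
    have hpos : 0 < orderOf x := orderOf_pos x
    have : x⁻¹ = x ^ (orderOf x - 1) := by
      rw [eq_comm, eq_inv_iff_mul_eq_one, ← pow_succ, Nat.sub_add_cancel hpos, h1]
    rw [this]
    exact Submonoid.pow_mem _ hx _
  exact Submonoid.exists_list_of_mem_closure hsub

lemma wl_spec (hgen : Subgroup.closure Re = ⊤) (g : G) :
    ∃ l : List G, (∀ x ∈ l, x ∈ Re) ∧ l.length = wordLength Re g ∧ l.prod = g := by
  have hne : {n : ℕ | ∃ l : List G, (∀ x ∈ l, x ∈ Re) ∧ l.length = n ∧ l.prod = g}.Nonempty := by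
    obtain ⟨l, hl, hp⟩ := wl_exists Re hgen g
    exact ⟨l.length, l, hl, rfl, hp⟩
  exact Nat.sInf_mem hne

lemma wl_add_le (hgen : Subgroup.closure Re = ⊤) (g h : G) :
    wordLength Re (g * h) ≤ wordLength Re g + wordLength Re h := by
  obtain ⟨l1, hl1, hlen1, hp1⟩ := wl_spec Re hgen g
  obtain ⟨l2, hl2, hlen2, hp2⟩ := wl_spec Re hgen h
  refine Nat.sInf_le ⟨l1 ++ l2, ?_, by simp [hlen1, hlen2], by simp [hp1, hp2]⟩
  intro x hx
  rcases List.mem_append.1 hx with h | h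
  · exact hl1 x h
  · exact hl2 x h

open Finset in
lemma wl_key (hgen : Subgroup.closure Re = ⊤)
    (d : ℕ) (hub : ∀ g : G, wordLength Re g ≤ d)
    (hpal : ∀ i ≤ d, Nat.card {g : G // wordLength Re g = i}
      = Nat.card {g : G // wordLength Re g = d - i})
    (φ : G → G) (hinj : Function.Injective φ)
    (hlb : ∀ g : G, d ≤ wordLength Re g + wordLength Re (φ g)) (g : G) :
    wordLength Re g + wordLength Re (φ g) = d := by
  classical
  haveI : Fintype G := Fintype.ofFinite G
  -- palindrome in filter form
  have hpal' : ∀ i ≤ d, (univ.filter fun x : G => wordLength Re x = i).card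
      = (univ.filter fun x : G => wordLength Re x = d - i).card := by
    intro i hi
    have := hpal i hi
    simpa [Nat.card_eq_fintype_card, Fintype.card_subtype] using this
  -- counting: card {ℓ ≤ j} = card {d - j ≤ ℓ} for j ≤ d
  have hcount : ∀ j ≤ d, (univ.filter fun x : G => wordLength Re x ≤ j).card
      = (univ.filter fun x : G => d - j ≤ wordLength Re x).card := by
    intro j
    induction j with
    | zero =>
      intro _
      have h1 : (univ.filter fun x : G => wordLength Re x ≤ 0)
          = univ.filter fun x : G => wordLength Re x = 0 := by
        apply filter_congr; intro x _; simp [Nat.le_zero]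
      have h2 : (univ.filter fun x : G => d - 0 ≤ wordLength Re x)
          = univ.filter fun x : G => wordLength Re x = d - 0 := by
        apply filter_congr; intro x _
        have := hub x
        simp only [Nat.sub_zero, eq_iff_iff]
        omega
      rw [h1, h2]
      exact hpal' 0 (Nat.zero_le d)
    | succ j ih =>
      intro hj
      have hj' : j ≤ d := Nat.le_of_succ_le hj
      have hA : (univ.filter fun x : G => wordLength Re x ≤ j + 1)
          = (univ.filter fun x : G => wordLength Re x ≤ j)
            ∪ (univ.filter fun x : G => wordLength Re x = j + 1) := by
        ext x; simp only [mem_filter, mem_union, mem_univ, true_and]; omega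
      have hB : (univ.filter fun x : G => d - (j + 1) ≤ wordLength Re x)
          = (univ.filter fun x : G => d - j ≤ wordLength Re x)
            ∪ (univ.filter fun x : G => wordLength Re x = d - (j + 1)) := by
        ext x; simp only [mem_filter, mem_union, mem_univ, true_and]; omega
      have hdA : Disjoint (univ.filter fun x : G => wordLength Re x ≤ j)
          (univ.filter fun x : G => wordLength Re x = j + 1) := by
        rw [disjoint_left]; intro x hx hx'
        simp only [mem_filter, mem_univ, true_and] at hx hx'; omega
      have hdB : Disjoint (univ.filter fun x : G => d - j ≤ wordLength Re x)
          (univ.filter fun x : G => wordLength Re x = d - (j + 1)) := by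
        rw [disjoint_left]; intro x hx hx'
        simp only [mem_filter, mem_univ, true_and] at hx hx'; omega
      rw [hA, hB, card_union_of_disjoint hdA, card_union_of_disjoint hdB,
        ih hj', hpal' (j + 1) hj]
  -- main argument
  set t := wordLength Re (φ g) with ht
  have htd : t ≤ d := hub (φ g)
  set j := d - t with hjdef
  have hjd : j ≤ d := Nat.sub_le d t
  set A := univ.filter fun x : G => wordLength Re x ≤ j with hAdef
  set B := univ.filter fun x : G => d - j ≤ wordLength Re x with hBdef
  have himg : A.image φ ⊆ B := by
    intro y hy
    obtain ⟨a, ha, rfl⟩ := mem_image.1 hy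
    simp only [hAdef, mem_filter, mem_univ, true_and] at ha
    have := hlb a
    simp only [hBdef, mem_filter, mem_univ, true_and]
    omega
  have hcard : B.card ≤ (A.image φ).card := by
    rw [card_image_of_injective _ hinj, ← hcount j hjd]
  have heq : A.image φ = B := Finset.eq_of_subset_of_card_le himg hcard
  have hφgB : φ g ∈ B := by
    simp only [hBdef, mem_filter, mem_univ, true_and]
    omega
  rw [← heq] at hφgB
  obtain ⟨a, ha, hag⟩ := mem_image.1 hφgB
  have hag' : a = g := hinj hag
  rw [hag'] at ha
  simp only [hAdef, mem_filter, mem_univ, true_and] at ha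
  have := hlb g
  omega

end aux

/-- The bilinear form on the free `k`-module on `G` defined on basis elements by
`B(g, h) = α(g, h)` if `g * h = m` and `ℓ(g) + ℓ(h) = d`, and `B(g, h) = 0`
otherwise. -/

noncomputable def skewHasseForm {G : Type*} [Group G] (Re : Set G) (m : G) (d : ℕ)
    {k : Type*} [Field k] (α : G × G → k) (x y : G →₀ k) : k :=
  x.sum fun g a => y.sum fun h b =>
    if g * h = m ∧ wordLength Re g + wordLength Re h = d then a * b * α (g, h) else 0

/-- If the Poincaré polynomial of `(G, Re)` is palindrome, `m` is the unique
element of maximal length `d`, and `α(g,h) ≠ 0` whenever `ℓ(gh) = ℓ(g) + ℓ(h)`,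
then the bilinear form `B` is nondegenerate on both sides. This is the form
making any skew Hasse algebra associated to `(G, Re)` Frobenius. -/
theorem skewHasseForm_nondegenerate
    {G : Type*} [Group G] [Finite G] (Re : Set G)
    (hgen : Subgroup.closure Re = ⊤) (hne : (1 : G) ∉ Re)
    (d : ℕ) (hub : ∀ g : G, wordLength Re g ≤ d) (hex : ∃ g : G, wordLength Re g = d)
    (hpal : ∀ i ≤ d, Nat.card {g : G // wordLength Re g = i}
      = Nat.card {g : G // wordLength Re g = d - i})
    (m : G) (hm : wordLength Re m = d)
    (hmu : ∀ g : G, wordLength Re g = d → g = m)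
    (k : Type*) [Field k] (α : G × G → k)
    (hα : ∀ g h : G, wordLength Re (g * h) = wordLength Re g + wordLength Re h →
      α (g, h) ≠ 0) :
    (∀ x : G →₀ k, x ≠ 0 → ∃ y : G →₀ k, skewHasseForm Re m d α x y ≠ 0) ∧
    (∀ y : G →₀ k, y ≠ 0 → ∃ x : G →₀ k, skewHasseForm Re m d α x y ≠ 0) := by
  classical
  -- key complementary-length facts
  have key1 : ∀ g : G, wordLength Re g + wordLength Re (g⁻¹ * m) = d := by
    refine wl_key Re hgen d hub hpal (fun g => g⁻¹ * m)
      (fun a b hab => inv_injective (mul_right_cancel hab)) (fun g => ?_)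
    show d ≤ wordLength Re g + wordLength Re (g⁻¹ * m)
    calc d = wordLength Re m := hm.symm
    _ = wordLength Re (g * (g⁻¹ * m)) := by group
    _ ≤ wordLength Re g + wordLength Re (g⁻¹ * m) := wl_add_le Re hgen _ _
  have key2 : ∀ h : G, wordLength Re h + wordLength Re (m * h⁻¹) = d := by
    refine wl_key Re hgen d hub hpal (fun h => m * h⁻¹)
      (fun a b hab => inv_injective (mul_left_cancel hab)) (fun h => ?_)
    show d ≤ wordLength Re h + wordLength Re (m * h⁻¹)
    have : wordLength Re m ≤ wordLength Re (m * h⁻¹) + wordLength Re h := by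
      have := wl_add_le Re hgen (m * h⁻¹) h
      simpa using this
    omega
  constructor
  · intro x hx
    obtain ⟨g, hg⟩ := Finsupp.support_nonempty_iff.2 hx
    refine ⟨Finsupp.single (g⁻¹ * m) 1, ?_⟩
    have hgm : g * (g⁻¹ * m) = m := by group
    unfold skewHasseForm
    have hinner : ∀ (g' : G) (a : k), (Finsupp.single (g⁻¹ * m) (1 : k)).sum
        (fun h b => if g' * h = m ∧ wordLength Re g' + wordLength Re h = d
          then a * b * α (g', h) else 0)
        = if g' * (g⁻¹ * m) = m ∧ wordLength Re g' + wordLength Re (g⁻¹ * m) = d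
          then a * 1 * α (g', g⁻¹ * m) else 0 := by
      intro g' a
      apply Finsupp.sum_single_index
      split <;> simp
    have hstep : (x.sum fun g' a => (Finsupp.single (g⁻¹ * m) (1 : k)).sum
        (fun h b => if g' * h = m ∧ wordLength Re g' + wordLength Re h = d
          then a * b * α (g', h) else 0))
        = x.sum fun g' a =>
          if g' * (g⁻¹ * m) = m ∧ wordLength Re g' + wordLength Re (g⁻¹ * m) = d
          then a * 1 * α (g', g⁻¹ * m) else 0 :=
      Finsupp.sum_congr (fun g' _ => hinner g' (x g'))
    rw [hstep, Finsupp.sum]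
    rw [Finset.sum_eq_single_of_mem g hg]
    · rw [if_pos ⟨hgm, key1 g⟩]
      have hα' : α (g, g⁻¹ * m) ≠ 0 := by
        apply hα
        rw [hgm, hm, key1 g]
      have hxg : x g ≠ 0 := Finsupp.mem_support_iff.1 hg
      simp only [mul_one]
      exact mul_ne_zero hxg hα'
    · intro g' _ hg'
      rw [if_neg]
      rintro ⟨h1, -⟩
      exact hg' (mul_right_cancel (h1.trans hgm.symm))
  · intro y hy
    obtain ⟨h, hh⟩ := Finsupp.support_nonempty_iff.2 hy
    refine ⟨Finsupp.single (m * h⁻¹) 1, ?_⟩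
    have hgm : (m * h⁻¹) * h = m := by group
    unfold skewHasseForm
    rw [Finsupp.sum_single_index (by simp [Finsupp.sum])]
    rw [Finsupp.sum]
    rw [Finset.sum_eq_single_of_mem h hh]
    · rw [if_pos ⟨hgm, by have := key2 h; omega⟩]
      have hα' : α (m * h⁻¹, h) ≠ 0 := by
        apply hα
        rw [hgm, hm]
        have := key2 h; omega
      have hyh : y h ≠ 0 := Finsupp.mem_support_iff.1 hh
      simp only [one_mul]
      exact mul_ne_zero hyh hα'
    · intro h' _ hh'
      rw [if_neg]
      rintro ⟨h1, -⟩
      exact hh' (mul_left_cancel (h1.trans hgm.symm))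
end
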